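/- Let ‖·‖ be a norm on c₀₀ satisfying the Schlumprecht implicit equation. Then for all reals a, b ≥ 0 and all indices m < n, ‖a·e_m + b·e_n‖ = max{ a, b, (a+b)/log₂3 }. -/
import Mathlib


open Filter Topology

/-- The coordinatewise restriction of a finitely supported sequence to a finite index set. -/
noncomputable def restrF (E : Finset ℕ) (ξ : ℕ →₀ ℝ) : ℕ →₀ ℝ :=
  Finsupp.filter (· ∈ E) ξ

/-- The sup-norm of a finitely supported sequence. -/
noncomputable def supNormF (ξ : ℕ →₀ ℝ) : ℝ := ⨆ i, |ξ i|

/-- The set of values appearing in the inner supremum of the Schlumprecht implicit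
equation: all numbers `(1/log₂(k+1)) ∑_{j<k} ‖E_j ξ‖` over chains `E 0 < ... < E (k-1)`
of nonempty finite sets with `k ≥ 2`. -/
noncomputable def schlumprechtSet (nrm : (ℕ →₀ ℝ) → ℝ) (ξ : ℕ →₀ ℝ) : Set ℝ :=
  {r | ∃ (k : ℕ) (E : ℕ → Finset ℕ), 2 ≤ k ∧
    (∀ j < k, (E j).Nonempty) ∧
    (∀ j, j + 1 < k → ∀ a ∈ E j, ∀ b ∈ E (j + 1), a < b) ∧
    r = (1 / Real.logb 2 (k + 1)) * ∑ j ∈ Finset.range k, nrm (restrF (E j) ξ)}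

/-- `nrm` is a norm on `c₀₀` satisfying the Schlumprecht implicit equation. -/
def IsSchlumprechtNorm (nrm : (ℕ →₀ ℝ) → ℝ) : Prop :=
  (∀ ξ η, nrm (ξ + η) ≤ nrm ξ + nrm η) ∧
  (∀ (c : ℝ) (ξ), nrm (c • ξ) = |c| * nrm ξ) ∧
  (∀ ξ, nrm ξ = 0 ↔ ξ = 0) ∧
  (∀ ξ, nrm ξ = max (supNormF ξ) (sSup (schlumprechtSet nrm ξ)))


lemma restrF_add (E : Finset ℕ) (ξ η : ℕ →₀ ℝ) :
    restrF E (ξ + η) = restrF E ξ + restrF E η := by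
  ext i
  simp only [restrF, Finsupp.filter_apply, Finsupp.add_apply]
  split <;> simp

lemma restrF_smul (E : Finset ℕ) (c : ℝ) (ξ : ℕ →₀ ℝ) :
    restrF E (c • ξ) = c • restrF E ξ := by
  ext i
  simp only [restrF, Finsupp.filter_apply, Finsupp.smul_apply]
  split <;> simp

lemma restrF_single (E : Finset ℕ) (i : ℕ) (c : ℝ) :
    restrF E (Finsupp.single i c) = if i ∈ E then Finsupp.single i c else 0 := by
  by_cases hi : i ∈ E
  · simp [restrF, Finsupp.filter_single_of_pos, hi]
  · simp [restrF, Finsupp.filter_single_of_neg, hi]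

lemma chain_lt {k : ℕ} {E : ℕ → Finset ℕ}
    (hne : ∀ j < k, (E j).Nonempty)
    (hch : ∀ j, j + 1 < k → ∀ a ∈ E j, ∀ b ∈ E (j + 1), a < b) :
    ∀ j j', j < j' → j' < k → ∀ a ∈ E j, ∀ b ∈ E j', a < b := by
  intro j j'
  induction j' with
  | zero => omega
  | succ j'' ih =>
    intro hjj hk a haa b hbb
    rcases Nat.lt_succ_iff_lt_or_eq.mp hjj with hlt | heq
    · obtain ⟨c, hc⟩ := hne j'' (by omega)
      exact lt_trans (ih hlt (by omega) a haa c hc) (hch j'' hk c hc b hbb)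
    · subst heq
      exact hch j hk a haa b hbb

lemma mem_unique {k : ℕ} {E : ℕ → Finset ℕ}
    (hne : ∀ j < k, (E j).Nonempty)
    (hch : ∀ j, j + 1 < k → ∀ a ∈ E j, ∀ b ∈ E (j + 1), a < b)
    (i : ℕ) : ∀ j < k, ∀ j' < k, i ∈ E j → i ∈ E j' → j = j' := by
  intro j hj j' hj' hij hij'
  rcases lt_trichotomy j j' with hlt | heq | hgt
  · exact absurd (chain_lt hne hch j j' hlt hj' i hij i hij') (lt_irrefl i)
  · exact heq
  · exact absurd (chain_lt hne hch j' j hgt hj i hij' i hij) (lt_irrefl i)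

lemma sum_indicator_le {k : ℕ} (P : ℕ → Prop) [DecidablePred P] (C : ℝ) (hC : 0 ≤ C)
    (hu : ∀ j < k, ∀ j' < k, P j → P j' → j = j') :
    ∑ j ∈ Finset.range k, (if P j then C else 0) ≤ C := by
  rw [← Finset.sum_filter, Finset.sum_const, nsmul_eq_mul]
  have hcard : ((Finset.range k).filter P).card ≤ 1 := by
    apply Finset.card_le_one.mpr
    intro x hx y hy
    simp only [Finset.mem_filter, Finset.mem_range] at hx hy
    exact hu x hx.1 y hy.1 hx.2 hy.2
  calc (((Finset.range k).filter P).card : ℝ) * C ≤ 1 * C := by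
        apply mul_le_mul_of_nonneg_right _ hC
        exact_mod_cast hcard
    _ = C := one_mul C

lemma logb3_gt_one : 1 < Real.logb 2 3 := by
  rw [show (1:ℝ) = Real.logb 2 2 by simp]
  apply Real.logb_lt_logb (by norm_num) (by norm_num) (by norm_num)

lemma logb3_le (k : ℕ) (hk : 2 ≤ k) : Real.logb 2 3 ≤ Real.logb 2 (k + 1) := by
  have h2 : (2:ℝ) ≤ k := by exact_mod_cast hk
  exact Real.logb_le_logb_of_le (by norm_num) (by norm_num) (by linarith)

variable {nrm : (ℕ →₀ ℝ) → ℝ}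

lemma nrm_zero (h : IsSchlumprechtNorm nrm) : nrm 0 = 0 := (h.2.2.1 0).mpr rfl

lemma nrm_nonneg (h : IsSchlumprechtNorm nrm) (ξ : ℕ →₀ ℝ) : 0 ≤ nrm ξ := by
  have h1 := h.1 ξ ((-1:ℝ) • ξ)
  have h2 : nrm ((-1:ℝ) • ξ) = nrm ξ := by rw [h.2.1]; simp
  have h3 : ξ + (-1:ℝ) • ξ = 0 := by simp
  rw [h3, nrm_zero h, h2] at h1
  linarith

lemma sSup_bound (h : IsSchlumprechtNorm nrm) (ξ : ℕ →₀ ℝ) (B : ℝ)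
    (hsum : ∀ (k : ℕ) (E : ℕ → Finset ℕ), 2 ≤ k → (∀ j < k, (E j).Nonempty) →
      (∀ j, j + 1 < k → ∀ a ∈ E j, ∀ b ∈ E (j + 1), a < b) →
      ∑ j ∈ Finset.range k, nrm (restrF (E j) ξ) ≤ B) :
    ∀ r ∈ schlumprechtSet nrm ξ, r ≤ (1 / Real.logb 2 3) * B := by
  rintro r ⟨k, E, hk, hne, hch, rfl⟩
  have hc : (0:ℝ) < Real.logb 2 3 := lt_trans one_pos logb3_gt_one
  have hck : Real.logb 2 3 ≤ Real.logb 2 (k + 1) := logb3_le k hk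
  have hS0 : 0 ≤ ∑ j ∈ Finset.range k, nrm (restrF (E j) ξ) :=
    Finset.sum_nonneg fun j _ => nrm_nonneg h _
  have hSB := hsum k E hk hne hch
  calc (1 / Real.logb 2 (k + 1)) * ∑ j ∈ Finset.range k, nrm (restrF (E j) ξ)
      ≤ (1 / Real.logb 2 3) * ∑ j ∈ Finset.range k, nrm (restrF (E j) ξ) := by
        apply mul_le_mul_of_nonneg_right _ hS0
        apply one_div_le_one_div_of_le hc hck
    _ ≤ (1 / Real.logb 2 3) * B := by
        apply mul_le_mul_of_nonneg_left hSB
        positivity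

lemma two_chain_mem (ξ : ℕ →₀ ℝ) (F G : Finset ℕ) (hF : F.Nonempty) (hG : G.Nonempty)
    (hFG : ∀ x ∈ F, ∀ y ∈ G, x < y) :
    (1 / Real.logb 2 3) * (nrm (restrF F ξ) + nrm (restrF G ξ)) ∈ schlumprechtSet nrm ξ := by
  refine ⟨2, fun j => if j = 0 then F else G, le_refl 2, ?_, ?_, ?_⟩
  · intro j hj
    interval_cases j <;> simp [hF, hG]
  · intro j hj x hx y hy
    have hj0 : j = 0 := by omega
    subst hj0
    simp only [if_pos rfl, if_neg (by norm_num : (1:ℕ) ≠ 0)] at hx hy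
    exact hFG x hx y hy
  · norm_num [Finset.sum_range_succ]

lemma nrm_unit (h : IsSchlumprechtNorm nrm) (i : ℕ) : nrm (Finsupp.single i (1:ℝ)) = 1 := by
  set N := nrm (Finsupp.single i (1:ℝ)) with hN
  have hc : (1:ℝ) < Real.logb 2 3 := logb3_gt_one
  have hc0 : (0:ℝ) < Real.logb 2 3 := lt_trans one_pos hc
  have hN0 : 0 ≤ N := nrm_nonneg h _
  -- sup norm
  have hsup : supNormF (Finsupp.single i (1:ℝ)) = 1 := by
    unfold supNormF
    apply le_antisymm
    · apply ciSup_le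
      intro j
      show |(Finsupp.single i (1:ℝ)) j| ≤ 1
      rw [Finsupp.single_apply]
      split <;> simp
    · have hbdd : BddAbove (Set.range fun j => |(Finsupp.single i (1:ℝ)) j|) := by
        refine ⟨1, ?_⟩
        rintro _ ⟨j, rfl⟩
        show |(Finsupp.single i (1:ℝ)) j| ≤ 1
        rw [Finsupp.single_apply]
        split <;> simp
      have := le_ciSup hbdd i
      simpa using this
  -- upper bound on schlumprecht set
  have hub : ∀ r ∈ schlumprechtSet nrm (Finsupp.single i (1:ℝ)),
      r ≤ (1 / Real.logb 2 3) * N := by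
    apply sSup_bound h _ N
    intro k E hk hne hch
    have heach : ∀ j, nrm (restrF (E j) (Finsupp.single i (1:ℝ)))
        = if i ∈ E j then N else 0 := by
      intro j
      rw [restrF_single]
      split
      · rfl
      · exact nrm_zero h
    calc ∑ j ∈ Finset.range k, nrm (restrF (E j) (Finsupp.single i (1:ℝ)))
        = ∑ j ∈ Finset.range k, (if i ∈ E j then N else 0) :=
          Finset.sum_congr rfl fun j _ => heach j
      _ ≤ N := sum_indicator_le _ N hN0 (mem_unique hne hch i)
  -- membership
  have hmem : (1 / Real.logb 2 3) * N ∈ schlumprechtSet nrm (Finsupp.single i (1:ℝ)) := by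
    have := two_chain_mem (nrm := nrm) (Finsupp.single i (1:ℝ)) {i} {i+1}
      (Finset.singleton_nonempty i) (Finset.singleton_nonempty (i+1))
      (by intro x hx y hy
          simp only [Finset.mem_singleton] at hx hy
          omega)
    have h1 : restrF {i} (Finsupp.single i (1:ℝ)) = Finsupp.single i (1:ℝ) := by
      rw [restrF_single]; simp
    have h2 : restrF {i+1} (Finsupp.single i (1:ℝ)) = 0 := by
      rw [restrF_single]; simp
    rw [h1, h2, nrm_zero h, add_zero] at this
    exact this
  have hsSup : sSup (schlumprechtSet nrm (Finsupp.single i (1:ℝ)))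
      = (1 / Real.logb 2 3) * N :=
    le_antisymm (csSup_le ⟨_, hmem⟩ hub) (le_csSup ⟨_, hub⟩ hmem)
  have heq := h.2.2.2 (Finsupp.single i (1:ℝ))
  rw [hsup, hsSup, ← hN] at heq
  have hge : 1 ≤ N := heq ▸ le_max_left _ _
  rcases eq_or_lt_of_le hge with heq1 | hgt
  · exact heq1.symm
  · exfalso
    have hlt : (1 / Real.logb 2 3) * N < N := by
      rw [div_mul_eq_mul_div, one_mul, div_lt_iff₀ hc0]
      nlinarith
    have := max_lt hgt hlt
    rw [← heq] at this
    exact lt_irrefl N this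

theorem schlumprecht_norm_two_units (nrm : (ℕ →₀ ℝ) → ℝ) (h : IsSchlumprechtNorm nrm)
    (a b : ℝ) (ha : 0 ≤ a) (hb : 0 ≤ b) (m n : ℕ) (hm : 1 ≤ m) (hmn : m < n) :
    nrm (a • Finsupp.single m (1 : ℝ) + b • Finsupp.single n (1 : ℝ))
      = max a (max b ((a + b) / Real.logb 2 3)) := by
  set ξ := a • Finsupp.single m (1 : ℝ) + b • Finsupp.single n (1 : ℝ) with hξ
  have hne : m ≠ n := Nat.ne_of_lt hmn
  have hc : (1:ℝ) < Real.logb 2 3 := logb3_gt_one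
  have hc0 : (0:ℝ) < Real.logb 2 3 := lt_trans one_pos hc
  -- coordinates of ξ
  have hxm : ξ m = a := by
    simp [hξ, Finsupp.single_apply, hne, hne.symm]
  have hxn : ξ n = b := by
    simp [hξ, Finsupp.single_apply, hne, hne.symm]
  have hxo : ∀ j, j ≠ m → j ≠ n → ξ j = 0 := by
    intro j hjm hjn
    simp [hξ, Finsupp.single_apply, Ne.symm hjm, Ne.symm hjn]
  -- sup norm
  have hsup : supNormF ξ = max a b := by
    unfold supNormF
    have hle : ∀ j, |ξ j| ≤ max a b := by
      intro j
      by_cases hjm : j = m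
      · subst hjm; rw [hxm, abs_of_nonneg ha]; exact le_max_left a b
      · by_cases hjn : j = n
        · subst hjn; rw [hxn, abs_of_nonneg hb]; exact le_max_right a b
        · rw [hxo j hjm hjn]; simp [le_max_iff, ha]
    have hbdd : BddAbove (Set.range fun j => |ξ j|) := ⟨max a b, by rintro _ ⟨j, rfl⟩; exact hle j⟩
    apply le_antisymm (ciSup_le hle)
    apply max_le
    · have := le_ciSup hbdd m
      rw [hxm, abs_of_nonneg ha] at this
      exact this
    · have := le_ciSup hbdd n
      rw [hxn, abs_of_nonneg hb] at this
      exact this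
  -- restriction formula
  have hres : ∀ E : Finset ℕ, restrF E ξ =
      (if m ∈ E then a • Finsupp.single m (1:ℝ) else 0) +
      (if n ∈ E then b • Finsupp.single n (1:ℝ) else 0) := by
    intro E
    rw [hξ, restrF_add, restrF_smul, restrF_smul, restrF_single, restrF_single]
    split_ifs <;> simp
  have hnsm : nrm (a • Finsupp.single m (1:ℝ)) = a := by
    rw [h.2.1, nrm_unit h, abs_of_nonneg ha, mul_one]
  have hnsn : nrm (b • Finsupp.single n (1:ℝ)) = b := by
    rw [h.2.1, nrm_unit h, abs_of_nonneg hb, mul_one]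
  have hresn : ∀ E : Finset ℕ, nrm (restrF E ξ) ≤
      (if m ∈ E then a else 0) + (if n ∈ E then b else 0) := by
    intro E
    rw [hres E]
    refine le_trans (h.1 _ _) (add_le_add ?_ ?_)
    · split_ifs
      · rw [hnsm]
      · rw [nrm_zero h]
    · split_ifs
      · rw [hnsn]
      · rw [nrm_zero h]
  -- upper bound for schlumprechtSet
  have hub : ∀ r ∈ schlumprechtSet nrm ξ, r ≤ (1 / Real.logb 2 3) * (a + b) := by
    apply sSup_bound h ξ (a + b)
    intro k E hk hne' hch
    calc ∑ j ∈ Finset.range k, nrm (restrF (E j) ξ)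
        ≤ ∑ j ∈ Finset.range k,
            ((if m ∈ E j then a else 0) + (if n ∈ E j then b else 0)) :=
          Finset.sum_le_sum fun j _ => hresn (E j)
      _ = (∑ j ∈ Finset.range k, (if m ∈ E j then a else 0)) +
          (∑ j ∈ Finset.range k, (if n ∈ E j then b else 0)) := Finset.sum_add_distrib
      _ ≤ a + b := add_le_add
          (sum_indicator_le _ a ha (mem_unique hne' hch m))
          (sum_indicator_le _ b hb (mem_unique hne' hch n))
  -- membership of the two-chain value
  have hmem : (1 / Real.logb 2 3) * (a + b) ∈ schlumprechtSet nrm ξ := by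
    have hkey := two_chain_mem (nrm := nrm) ξ {m} {n}
      (Finset.singleton_nonempty m) (Finset.singleton_nonempty n)
      (by intro x hx y hy
          simp only [Finset.mem_singleton] at hx hy
          omega)
    have h1 : nrm (restrF {m} ξ) = a := by
      rw [hres, if_pos (Finset.mem_singleton_self m),
        if_neg (fun hcon => hne (Finset.mem_singleton.mp hcon).symm), add_zero, hnsm]
    have h2 : nrm (restrF {n} ξ) = b := by
      rw [hres, if_pos (Finset.mem_singleton_self n),
        if_neg (fun hcon => hne (Finset.mem_singleton.mp hcon)), zero_add, hnsn]
    rwa [h1, h2] at hkey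
  have hsSup : sSup (schlumprechtSet nrm ξ) = (1 / Real.logb 2 3) * (a + b) :=
    le_antisymm (csSup_le ⟨_, hmem⟩ hub) (le_csSup ⟨_, hub⟩ hmem)
  have heq := h.2.2.2 ξ
  rw [hsup, hsSup] at heq
  rw [heq, max_assoc, one_div, inv_mul_eq_div]
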